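/- Let m ≥ 1. The polynomial P(t) = ∏_{ε ∈ {−1,1}^m} (1 + ε_1 t_1 + ⋯ + ε_m t_m) is irreducible in the subring ℂ[t_1², …, t_m²] of ℂ[t_1, …, t_m]: if Q_1, Q_2 ∈ ℂ[x_1, …, x_m] satisfy P(t) = Q_1(t_1², …, t_m²) · Q_2(t_1², …, t_m²), then Q_1 is a constant polynomial or Q_2 is a constant polynomial. -/

import Mathlib

open MvPolynomial

/-- The sign `±1 ∈ ℂ` attached to a boolean. -/
noncomputable def signVal (b : Bool) : ℂ := if b then 1 else -1

/-!
Each factor `1 + ε₁t₁ + ⋯ + εₘtₘ` has total degree one and constant term one, so it is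
irreducible, and distinct sign vectors give non-associated factors. The substitution
`tᵢ ↦ εᵢδᵢtᵢ` fixes every polynomial in `t₁², …, tₘ²` and maps the factor of `ε` to that of `δ`.
Hence if `Q₁(t²)` is not a unit, it has an irreducible factor, which is one of the linear
factors, and then all of them divide `Q₁(t²)`; so `P` divides `Q₁(t²)` and `Q₂(t²)` is a unit.
Units of `ℂ[t]` are constants, and `Q(t²)` is a unit only if `Q` is.
-/

open Function

noncomputable def affineForm {σ R : Type*} [CommSemiring R] [Fintype σ] (a : σ → R) :
    MvPolynomial σ R :=
  1 + ∑ i, C (a i) * X i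

namespace affineForm

variable {σ R : Type*} [Fintype σ] [CommRing R]

@[simp]
theorem coeff_zero (a : σ → R) : coeff 0 (affineForm a) = 1 := by
  classical
  simp [affineForm, coeff_sum, coeff_C_mul, coeff_X]

@[simp]
theorem coeff_single (a : σ → R) (i : σ) :
    coeff (Finsupp.single i 1) (affineForm a) = a i := by
  classical
  simp [affineForm, coeff_sum, coeff_C_mul, coeff_X, coeff_one, Finsupp.single_eq_single_iff,
    (Finsupp.single_ne_zero.mpr one_ne_zero : Finsupp.single i 1 ≠ 0).symm]

theorem injective : Injective (affineForm : (σ → R) → MvPolynomial σ R) :=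
  fun a b h => funext fun i => by rw [← coeff_single a i, h, coeff_single]

theorem totalDegree_eq_one [Nontrivial R] {a : σ → R} (ha : a ≠ 0) :
    (affineForm a).totalDegree = 1 := by
  obtain ⟨i, hi⟩ := Function.ne_iff.mp ha
  refine le_antisymm ((totalDegree_add _ _).trans (max_le (by simp) ?_)) ?_
  · refine (totalDegree_finsetSum _ _).trans (Finset.sup_le fun j _ => ?_)
    rw [C_mul_X_eq_monomial]
    exact (totalDegree_monomial_le _ _).trans (by simp)
  · simpa using le_totalDegree (s := Finsupp.single i 1) (p := affineForm a)
      (by simpa [mem_support_iff] using hi)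

theorem irreducible [IsDomain R] {a : σ → R} (ha : a ≠ 0) : Irreducible (affineForm a) :=
  irreducible_of_totalDegree_eq_one (totalDegree_eq_one ha) fun x hx =>
    isUnit_of_dvd_one (by simpa using hx 0)

theorem eq_of_dvd [IsDomain R] {a b : σ → R} (ha : a ≠ 0) (hb : b ≠ 0)
    (h : affineForm a ∣ affineForm b) : a = b := by
  obtain ⟨u, hu⟩ := (irreducible ha).associated_of_dvd (irreducible hb) h
  obtain ⟨r, -, hr⟩ := isUnit_iff_eq_C_of_isReduced.mp u.isUnit
  have hr1 : r = 1 := by simpa [hr, mul_comm _ (C r), coeff_C_mul] using congrArg (coeff 0) hu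
  exact injective (by rwa [hr, hr1, C_1, mul_one] at hu)

theorem aeval_C_mul_X (s a : σ → R) :
    aeval (fun i => C (s i) * X i) (affineForm a) = affineForm (s * a) := by
  simp only [affineForm, map_add, map_one, map_sum, map_mul, aeval_C, aeval_X, algebraMap_eq,
    Pi.mul_apply]
  congr 1
  exact Finset.sum_congr rfl fun i _ => by ring

end affineForm

theorem MvPolynomial.aeval_C_mul_X_expand {σ R : Type*} [CommSemiring R] {p : ℕ} {s : σ → R}
    (hs : ∀ i, s i ^ p = 1) (f : MvPolynomial σ R) :
    aeval (fun i => C (s i) * X i) (expand p f) = expand p f := by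
  have hpow : (fun i => C (s i) * X i) ^ p = fun i => (X i : MvPolynomial σ R) ^ p := by
    funext i
    simp [mul_pow, ← C_pow, hs]
  rw [aeval_expand, hpow]
  rfl

theorem MvPolynomial.eq_C_of_isUnit_expand {σ R : Type*} [CommRing R] [IsReduced R] {p : ℕ}
    (hp : p ≠ 0) {f : MvPolynomial σ R} (h : IsUnit (expand p f)) : ∃ r, f = C r := by
  obtain ⟨r, -, hr⟩ := isUnit_iff_eq_C_of_isReduced.mp ((isLocalHom_expand R σ hp).map_nonunit f h)
  exact ⟨r, hr⟩

theorem isUnit_of_mul_eq_prod_of_dvd_imp_dvd {R ι : Type*} [CommRing R] [IsDomain R]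
    [UniqueFactorizationMonoid R] [Fintype ι] {f : ι → R} (hf : ∀ i, Irreducible (f i))
    (hcop : Pairwise (IsRelPrime on f)) {a b : R} (hab : a * b = ∏ i, f i) (ha : ¬IsUnit a)
    (htrans : ∀ i j, f i ∣ a → f j ∣ a) : IsUnit b := by
  have ha0 : a ≠ 0 :=
    left_ne_zero_of_mul (hab ▸ Finset.prod_ne_zero_iff.mpr fun i _ => (hf i).ne_zero)
  obtain ⟨p, hp, hpa⟩ := WfDvdMonoid.exists_irreducible_factor ha ha0
  obtain ⟨i, -, hpi⟩ := (UniqueFactorizationMonoid.irreducible_iff_prime.mp hp).exists_mem_finset_dvd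
    (hab ▸ hpa.mul_right b)
  have hia : f i ∣ a := (hp.associated_of_dvd (hf i) hpi).symm.dvd.trans hpa
  have hdvd : a * b ∣ a * 1 := by
    rw [mul_one, hab]
    exact Fintype.prod_dvd_of_isRelPrime hcop fun j => htrans i j hia
  exact isUnit_of_dvd_one ((mul_dvd_mul_iff_left ha0).mp hdvd)

theorem signVal_mul_self (b : Bool) : signVal b * signVal b = 1 := by cases b <;> simp [signVal]

theorem signVal_injective : Injective signVal := by
  intro a b h
  cases a <;> cases b <;> first | rfl | norm_num [signVal] at h

theorem signVal_comp_ne_zero {σ : Type*} [Nonempty σ] (ε : σ → Bool) : signVal ∘ ε ≠ 0 :=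
  fun hε =>
    let i := Classical.arbitrary σ
    left_ne_zero_of_mul_eq_one (signVal_mul_self (ε i)) (congrFun hε i)

section signForms

variable {σ : Type*} [Fintype σ]

theorem pairwise_isRelPrime_affineForm_signVal [Nonempty σ] :
    Pairwise (IsRelPrime on fun ε : σ → Bool => affineForm (signVal ∘ ε)) :=
  fun ε δ hεδ =>
    (affineForm.irreducible (signVal_comp_ne_zero ε)).isRelPrime_iff_not_dvd.mpr fun hdvd =>
      hεδ (signVal_injective.comp_left
        (affineForm.eq_of_dvd (signVal_comp_ne_zero ε) (signVal_comp_ne_zero δ) hdvd))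

theorem affineForm_signVal_dvd_expand_two {ε : σ → Bool} (δ : σ → Bool)
    {f : MvPolynomial σ ℂ} (h : affineForm (signVal ∘ ε) ∣ expand 2 f) :
    affineForm (signVal ∘ δ) ∣ expand 2 f := by
  let s : σ → ℂ := fun i => signVal (ε i) * signVal (δ i)
  have hs : ∀ i, s i ^ 2 = 1 := fun i => by
    rw [sq, mul_mul_mul_comm, signVal_mul_self, signVal_mul_self, one_mul]
  have hsε : s * (signVal ∘ ε) = signVal ∘ δ := funext fun i => by
    simp only [s, Pi.mul_apply, Function.comp_apply]
    rw [mul_right_comm, signVal_mul_self, one_mul]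
  have := map_dvd (aeval fun i => C (s i) * X i) h
  rwa [affineForm.aeval_C_mul_X, hsε, aeval_C_mul_X_expand hs] at this

end signForms

/-- the polynomial `P(t) = ∏_ε (1 + ε_1 t_1 + ⋯ + ε_m t_m)` is
irreducible in the subring `ℂ[t_1^2, …, t_m^2]` of `ℂ[t_1, …, t_m]`: if
`P(t) = Q_1(t^2) · Q_2(t^2)` then `Q_1` or `Q_2` is a constant polynomial. -/
theorem lauricella_sing_irreducible_in_square_subring (m : ℕ) (hm : 1 ≤ m)
    (Q₁ Q₂ : MvPolynomial (Fin m) ℂ)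
    (h : (∏ ε : Fin m → Bool, (1 + ∑ i, C (signVal (ε i)) * X i)) =
      aeval (fun i : Fin m => (X i : MvPolynomial (Fin m) ℂ) ^ 2) Q₁ *
      aeval (fun i : Fin m => (X i : MvPolynomial (Fin m) ℂ) ^ 2) Q₂) :
    (∃ c : ℂ, Q₁ = C c) ∨ (∃ c : ℂ, Q₂ = C c) := by
  have : Nonempty (Fin m) := ⟨⟨0, hm⟩⟩
  have hP : expand 2 Q₁ * expand 2 Q₂ = ∏ ε : Fin m → Bool, affineForm (signVal ∘ ε) := h.symm
  by_cases hA : IsUnit (expand 2 Q₁)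
  · exact Or.inl (eq_C_of_isUnit_expand two_ne_zero hA)
  · refine Or.inr (eq_C_of_isUnit_expand two_ne_zero ?_)
    exact isUnit_of_mul_eq_prod_of_dvd_imp_dvd
      (fun ε => affineForm.irreducible (signVal_comp_ne_zero ε))
      pairwise_isRelPrime_affineForm_signVal hP hA
      fun _ δ => affineForm_signVal_dvd_expand_two δ
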